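/- arXiv:2602.02281 — 4 statements merged into one kernel-verified Lean document; each statement's English description precedes it below -/
import Mathlib

section
/- Autonomous finite-time convergence in 2L steps: consider the coupled discrete system m^{k+1} = σ(W m^k + β), s^{k+1} = W^T D(m^k) s^k + g(m^k), where D(m) = diag(σ'(W m + β)), W is strictly sub-diagonal block-triangular with L blocks, and g(m) depends only on the output block of m. Then m^k = m̄ (the forward activations) for all k ≥ L, and s^k = s̄ for all k ≥ 2L, where s̄ is the unique solution of (I − W^T D(m̄)) s̄ = g(m̄). -/
open Matrix

/-- Autonomous finite-time convergence in twice-the-depth steps: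
for an `(L+1)`-layer feedforward network in global form (blocks `0,…,L`, so the
depth is `L+1`), the coupled system `m^{k+1} = σ(W m^k + β)`,
`s^{k+1} = Wᵀ D(m^k) s^k + g(m^k)` with `D(m) = diag(σ'(W m + β))` and `g`
depending only on (and supported in) the output block satisfies: `m^k = m̄`
(the forward activations) for all `k ≥ L+1`, and `s^k = s̄` for all
`k ≥ 2(L+1)`, where `s̄` is the unique solution of
`(I - Wᵀ D(m̄)) s̄ = g(m̄)`. -/
theorem stmt7 {L : ℕ} {n : Fin (L + 1) → ℕ}
    (W : Matrix ((ℓ : Fin (L + 1)) × Fin (n ℓ)) ((ℓ : Fin (L + 1)) × Fin (n ℓ)) ℝ)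
    (hW : ∀ i j : (ℓ : Fin (L + 1)) × Fin (n ℓ), (i.1 : ℕ) ≠ (j.1 : ℕ) + 1 → W i j = 0)
    (σ dσ : Fin (L + 1) → ℝ → ℝ)
    (hσ : ∀ ℓ u, HasDerivAt (σ ℓ) (dσ ℓ u) u)
    (β : ((ℓ : Fin (L + 1)) × Fin (n ℓ)) → ℝ)
    (g : (((ℓ : Fin (L + 1)) × Fin (n ℓ)) → ℝ) → (((ℓ : Fin (L + 1)) × Fin (n ℓ)) → ℝ))
    (hgdep : ∀ v w, (∀ j : Fin (n (Fin.last L)), v ⟨Fin.last L, j⟩ = w ⟨Fin.last L, j⟩) →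
      g v = g w)
    (hgsupp : ∀ v (i : (ℓ : Fin (L + 1)) × Fin (n ℓ)), i.1 ≠ Fin.last L → g v i = 0)
    (m s : ℕ → ((ℓ : Fin (L + 1)) × Fin (n ℓ)) → ℝ)
    (hm : ∀ k i, m (k + 1) i = σ i.1 (W.mulVec (m k) i + β i))
    (hs : ∀ k, s (k + 1) =
      (Wᵀ * Matrix.diagonal (fun i => dσ i.1 (W.mulVec (m k) i + β i))).mulVec (s k) + g (m k))
    (mbar : ((ℓ : Fin (L + 1)) × Fin (n ℓ)) → ℝ)
    (hmbar : ∀ i, mbar i = σ i.1 (W.mulVec mbar i + β i)) :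
    (∀ k, L + 1 ≤ k → m k = mbar) ∧
    ∃ sbar : ((ℓ : Fin (L + 1)) × Fin (n ℓ)) → ℝ,
      (1 - Wᵀ * Matrix.diagonal (fun i => dσ i.1 (W.mulVec mbar i + β i))).mulVec sbar
        = g mbar ∧
      (∀ t, (1 - Wᵀ * Matrix.diagonal (fun i => dσ i.1 (W.mulVec mbar i + β i))).mulVec t
        = g mbar → t = sbar) ∧
      ∀ k, 2 * (L + 1) ≤ k → s k = sbar := by

  classical
  -- Forward finite-time convergence
  have hfwd : ∀ k (i : (ℓ : Fin (L + 1)) × Fin (n ℓ)), (i.1 : ℕ) < k → m k i = mbar i := by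
    intro k
    induction k with
    | zero => intro i h; exact absurd h (Nat.not_lt_zero _)
    | succ k ih =>
      intro i hi
      rw [hm k i, hmbar i]
      congr 2
      unfold Matrix.mulVec dotProduct
      apply Finset.sum_congr rfl
      intro j _
      by_cases hj : W i j = 0
      · simp [hj]
      · have hji : (i.1 : ℕ) = (j.1 : ℕ) + 1 := by
          by_contra h; exact hj (hW i j h)
        have : (j.1 : ℕ) < k := by omega
        rw [ih j this]
  have hm1 : ∀ k, L + 1 ≤ k → m k = mbar := by
    intro k hk
    funext i
    exact hfwd k i (lt_of_lt_of_le (Nat.lt_succ_of_le (Nat.le_of_lt_succ i.1.isLt)) hk)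
  refine ⟨hm1, ?_⟩
  set d : ((ℓ : Fin (L + 1)) × Fin (n ℓ)) → ℝ :=
    fun i => dσ i.1 (W.mulVec mbar i + β i) with hd
  set A : Matrix ((ℓ : Fin (L + 1)) × Fin (n ℓ)) ((ℓ : Fin (L + 1)) × Fin (n ℓ)) ℝ :=
    Wᵀ * Matrix.diagonal d with hA
  have hA0 : ∀ i j, A i j ≠ 0 → (j.1 : ℕ) = (i.1 : ℕ) + 1 := by
    intro i j hij
    by_contra h
    apply hij
    rw [hA, Matrix.mul_diagonal, Matrix.transpose_apply, hW j i h, zero_mul]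
  have hApow : ∀ p i j, (A ^ p) i j ≠ 0 → (j.1 : ℕ) = (i.1 : ℕ) + p := by
    intro p
    induction p with
    | zero =>
      intro i j h
      rw [pow_zero] at h
      by_cases hij : i = j
      · subst hij; simp
      · exact absurd (Matrix.one_apply_ne hij) h
    | succ p ih =>
      intro i j h
      rw [pow_succ, Matrix.mul_apply] at h
      obtain ⟨x, hx⟩ := Finset.exists_ne_zero_of_sum_ne_zero h
      have h1 : (A ^ p) i x ≠ 0 := fun hc => hx.2 (by rw [hc, zero_mul])
      have h2 : A x j ≠ 0 := fun hc => hx.2 (by rw [hc, mul_zero])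
      have := ih i x h1
      have := hA0 x j h2
      omega
  have hnil : A ^ (L + 1) = 0 := by
    ext i j
    by_contra h
    have := hApow (L + 1) i j h
    have hj : (j.1 : ℕ) ≤ L := Nat.le_of_lt_succ j.1.isLt
    omega
  set S : Matrix ((ℓ : Fin (L + 1)) × Fin (n ℓ)) ((ℓ : Fin (L + 1)) × Fin (n ℓ)) ℝ :=
    ∑ p ∈ Finset.range (L + 1), A ^ p with hS
  have hcomm : A * S = S * A := by
    rw [hS, Finset.mul_sum, Finset.sum_mul]
    exact Finset.sum_congr rfl fun p _ => by rw [← pow_succ', pow_succ]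
  have hSN : S * (1 - A) = 1 := by
    have h1 := geom_sum_mul A (L + 1)
    rw [hnil, zero_sub] at h1
    have h2 : S * (1 - A) = -(S * (A - 1)) := by noncomm_ring
    rw [h2, h1, neg_neg]
  have hNS : (1 - A) * S = 1 := by
    have : (1 - A) * S = S * (1 - A) := by
      rw [sub_mul, mul_sub, one_mul, mul_one, hcomm]
    rw [this, hSN]
  set sb := S.mulVec (g mbar) with hsbdef
  refine ⟨sb, ?_, ?_, ?_⟩
  · rw [hsbdef, Matrix.mulVec_mulVec, hNS, Matrix.one_mulVec]
  · intro t ht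
    have := congrArg S.mulVec ht
    rwa [Matrix.mulVec_mulVec, hSN, Matrix.one_mulVec] at this
  · have hfix : (1 - A).mulVec sb = g mbar := by
      rw [hsbdef, Matrix.mulVec_mulVec, hNS, Matrix.one_mulVec]
    have hrec : ∀ i, sb i = A.mulVec sb i + g mbar i := by
      intro i
      have := congrFun hfix i
      rw [Matrix.sub_mulVec, Matrix.one_mulVec, Pi.sub_apply] at this
      linarith
    have hsb : ∀ k (i : (ℓ : Fin (L + 1)) × Fin (n ℓ)),
        2 * L + 2 ≤ k + (i.1 : ℕ) → s k i = sb i := by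
      intro k
      induction k with
      | zero =>
        intro i h
        have : (i.1 : ℕ) ≤ L := Nat.le_of_lt_succ i.1.isLt
        omega
      | succ k ih =>
        intro i hi
        have hiL : (i.1 : ℕ) ≤ L := Nat.le_of_lt_succ i.1.isLt
        have hkL : L + 1 ≤ k := by omega
        have hmk : m k = mbar := hm1 k hkL
        have hsk := congrFun (hs k) i
        rw [hmk] at hsk
        rw [hsk, Pi.add_apply, hrec i]
        congr 1
        show (A.mulVec (s k)) i = (A.mulVec sb) i
        simp only [Matrix.mulVec, dotProduct]
        apply Finset.sum_congr rfl
        intro j _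
        by_cases hj : A i j = 0
        · simp [hj]
        · have hji : (j.1 : ℕ) = (i.1 : ℕ) + 1 := hA0 i j hj
          rw [ih j (by omega)]
    intro k hk
    funext i
    exact hsb k i (by omega)
end

section
/- Equilibrium stress equals activation gradients: let m̄ be the forward activations of an L-layer feedforward network and let C(a_L) be a differentiable cost on the output. Define s̄ as the unique solution of (I − W^T D̄) s̄ = ∇_m C, where D̄ = diag(σ'(W m̄ + β)) and ∇_m C is the stacked vector that is zero except for the block ∇_{a_L} C(m̄_L) in the last position. Then the ℓ-th block of s̄ equals the total derivative of C with respect to the activations of layer ℓ, i.e., s̄_ℓ = ∂C/∂a_ℓ as computed by the chain rule through the network; equivalently the pre-activation errors δ_ℓ = D_ℓ s̄_ℓ satisfy the backpropagation recursion δ_L = ∇_{a_L}C ⊙ σ_L'(z_L), δ_ℓ = (W_{ℓ+1}^T δ_{ℓ+1}) ⊙ σ_ℓ'(z_ℓ). -/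
open Matrix

/-- Equilibrium stress equals activation gradients: let `s̄` be
the unique solution of `(I - Wᵀ D̄) s̄ = ∇C`, where `D̄ = diag(d)` collects the
activation derivatives `σ'(z̄)` at the forward pass and `∇C` is supported on the
output block.  Then on the output block `s̄` equals `∇_{a_L} C`, and the
pre-activation errors `δ = D̄ s̄` satisfy exactly the backpropagation recursion:
`δ_L = ∇_{a_L} C ⊙ σ_L'(z_L)` and `δ_ℓ = (W_{ℓ+1}ᵀ δ_{ℓ+1}) ⊙ σ_ℓ'(z_ℓ)`
(the latter written globally as `δ = d ⊙ (Wᵀ δ)` off the output block), which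
is precisely the statement that `s̄_ℓ` is the total derivative of the cost with
respect to the layer-`ℓ` activations. -/
theorem stmt8 {L : ℕ} {n : Fin (L + 1) → ℕ}
    (W : Matrix ((ℓ : Fin (L + 1)) × Fin (n ℓ)) ((ℓ : Fin (L + 1)) × Fin (n ℓ)) ℝ)
    (hW : ∀ i j : (ℓ : Fin (L + 1)) × Fin (n ℓ), (i.1 : ℕ) ≠ (j.1 : ℕ) + 1 → W i j = 0)
    (d : ((ℓ : Fin (L + 1)) × Fin (n ℓ)) → ℝ)
    (gradC : ((ℓ : Fin (L + 1)) × Fin (n ℓ)) → ℝ)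
    (hsupp : ∀ i : (ℓ : Fin (L + 1)) × Fin (n ℓ), i.1 ≠ Fin.last L → gradC i = 0)
    (sbar : ((ℓ : Fin (L + 1)) × Fin (n ℓ)) → ℝ)
    (hsbar : (1 - Wᵀ * Matrix.diagonal d).mulVec sbar = gradC) :
    (∀ i : (ℓ : Fin (L + 1)) × Fin (n ℓ), i.1 = Fin.last L →
      sbar i = gradC i ∧ (Matrix.diagonal d).mulVec sbar i = d i * gradC i) ∧
    (∀ i : (ℓ : Fin (L + 1)) × Fin (n ℓ), i.1 ≠ Fin.last L →
      (Matrix.diagonal d).mulVec sbar i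
        = d i * Wᵀ.mulVec ((Matrix.diagonal d).mulVec sbar) i) := by

  have key : ∀ i, sbar i - Wᵀ.mulVec ((Matrix.diagonal d).mulVec sbar) i = gradC i := by
    intro i
    have h := congrFun hsbar i
    simpa [Matrix.sub_mulVec, Matrix.one_mulVec, Matrix.mulVec_mulVec] using h
  have hlast : ∀ i : (ℓ : Fin (L + 1)) × Fin (n ℓ), i.1 = Fin.last L →
      Wᵀ.mulVec ((Matrix.diagonal d).mulVec sbar) i = 0 := by
    intro i hi
    simp only [Matrix.mulVec, dotProduct]
    apply Finset.sum_eq_zero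
    intro j _
    have hz : W j i = 0 := by
      apply hW
      have hj := j.1.isLt
      rw [hi]
      simp only [Fin.val_last]
      omega
    simp [Matrix.transpose_apply, hz]
  constructor
  · intro i hi
    have h1 : sbar i = gradC i := by
      have := key i
      rw [hlast i hi] at this
      linarith
    refine ⟨h1, ?_⟩
    simp [Matrix.mulVec_diagonal, h1]
  · intro i hi
    have h1 : sbar i = Wᵀ.mulVec ((Matrix.diagonal d).mulVec sbar) i := by
      have := key i
      rw [hsupp i hi] at this
      linarith
    rw [Matrix.mulVec_diagonal, h1]
end

section
/- Unit-step Euler cancellation: applying forward Euler with step size Δt to ṁ = σ(Wm+β) − m yields m^{k+1} = (1−Δt) m^k + Δt σ(W m^k + β); exactly when Δt = 1 this reduces to the pure layer map m^{k+1} = σ(W m^k + β), and for this choice the iteration reaches the unique fixed point in at most L steps, while for 0 < Δt < 1 and nilpotent W the iteration converges only asymptotically in general (the residual m^k − m̄ need not vanish in finitely many steps). -/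
/-- Unit-step Euler cancellation: (i) forward Euler applied to
`ṁ = σ(W m + β) - m` gives `m^{k+1} = (1-Δt) m^k + Δt σ(W m^k + β)` (the
algebraic identity `v + Δt (w - v) = (1-Δt) v + Δt w`); (ii) exactly for
`Δt = 1` this is the pure layer map, which reaches the unique fixed point in
at most `L` steps; (iii) for `0 < Δt < 1` the iteration converges only
asymptotically in general: there is a (nilpotent-`W`) network and initial
condition whose residual `m^k - m̄` never vanishes in finitely many steps. -/
theorem stmt16 :
    (∀ (N : ℕ) (v w : Fin N → ℝ) (Δt : ℝ), v + Δt • (w - v) = (1 - Δt) • v + Δt • w) ∧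
    (∀ (L : ℕ) (n : Fin L → ℕ)
      (W : Matrix ((ℓ : Fin L) × Fin (n ℓ)) ((ℓ : Fin L) × Fin (n ℓ)) ℝ),
      (∀ i j : (ℓ : Fin L) × Fin (n ℓ), (i.1 : ℕ) ≠ (j.1 : ℕ) + 1 → W i j = 0) →
      ∀ (σ : Fin L → ℝ → ℝ) (β : ((ℓ : Fin L) × Fin (n ℓ)) → ℝ)
        (m : ℕ → ((ℓ : Fin L) × Fin (n ℓ)) → ℝ),
        (∀ k i, m (k + 1) i
          = (1 - (1 : ℝ)) * m k i + (1 : ℝ) * σ i.1 (W.mulVec (m k) i + β i)) →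
        ∀ mbar : ((ℓ : Fin L) × Fin (n ℓ)) → ℝ,
          (∀ i, mbar i = σ i.1 (W.mulVec mbar i + β i)) →
          ∀ k, L ≤ k → m k = mbar) ∧
    (∀ Δt : ℝ, 0 < Δt → Δt < 1 →
      ∃ (L : ℕ) (n : Fin L → ℕ)
        (W : Matrix ((ℓ : Fin L) × Fin (n ℓ)) ((ℓ : Fin L) × Fin (n ℓ)) ℝ)
        (σ : Fin L → ℝ → ℝ) (β : ((ℓ : Fin L) × Fin (n ℓ)) → ℝ)
        (m : ℕ → ((ℓ : Fin L) × Fin (n ℓ)) → ℝ)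
        (mbar : ((ℓ : Fin L) × Fin (n ℓ)) → ℝ),
        (∀ i j : (ℓ : Fin L) × Fin (n ℓ), (i.1 : ℕ) ≠ (j.1 : ℕ) + 1 → W i j = 0) ∧
        (∀ k i, m (k + 1) i
          = (1 - Δt) * m k i + Δt * σ i.1 (W.mulVec (m k) i + β i)) ∧
        (∀ i, mbar i = σ i.1 (W.mulVec mbar i + β i)) ∧
        (∀ k, m k ≠ mbar)) := by
  refine ⟨?_, ?_, ?_⟩
  · intro N v w Δt
    funext i
    simp [Pi.add_apply, Pi.smul_apply, Pi.sub_apply]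
    ring
  · intro L n W hW σ β m hm mbar hbar k hk
    have key : ∀ k, ∀ i : (ℓ : Fin L) × Fin (n ℓ), (i.1 : ℕ) < k → m k i = mbar i := by
      intro k
      induction k with
      | zero => intro i h; omega
      | succ k ih =>
        intro i hi
        have hmv : W.mulVec (m k) i = W.mulVec mbar i := by
          unfold Matrix.mulVec dotProduct
          refine Finset.sum_congr rfl fun j _ => ?_
          by_cases h : (i.1 : ℕ) = (j.1 : ℕ) + 1
          · simp only [ih j (by omega)]
          · simp [hW i j h]
        rw [hm k i, hmv, ← hbar i]; ring
    funext i
    exact key k i (lt_of_lt_of_le i.1.isLt hk)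
  · intro Δt h0 h1
    refine ⟨1, fun _ => 1, 0, fun _ => id, 0,
      fun k _ => (1 - Δt) ^ k, 0, ?_, ?_, ?_, ?_⟩
    · intro i j _; rfl
    · intro k i
      simp [Matrix.mulVec, pow_succ]
      ring
    · intro i; simp [Matrix.mulVec]
    · intro k h
      have := congrFun h ⟨0, 0⟩
      simp at this
      linarith [this.1]
end

section
/- For the continuous-time mean dynamics ṁ = σ(Wm+β) − m with W strictly sub-diagonal block-triangular and σ Lipschitz acting blockwise, the block error e_ℓ(t) = m_ℓ(t) − m̄_ℓ satisfies ‖e_ℓ(t)‖ ≤ p_ℓ(t) e^{−t} for a polynomial p_ℓ of degree at most ℓ−1 depending on the initial condition and Lipschitz constants; hence m(t) → m̄ exponentially. -/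
/-!
Write `e = m - m̄`; since `m̄` is a fixed point, `ė = (σ(Wm+β) - σ(Wm̄+β)) - e`. As `W` only
feeds block `ℓ` into block `ℓ + 1`, the drive of block `0` vanishes and the drive of block `ℓ + 1`
is bounded by `K_{ℓ+1} ∑|W_ij| ‖e_ℓ‖`. A drive of size `A (1+t)^k e^{-t}` produces, by the mean
value inequality applied to `e^t e(t)`, an error of size `(‖e(0)‖ + A)(1+t)^{k+1} e^{-t}`;
induction on the block index gives the bound, and `(1+t)^ℓ e^{-t} → 0` the convergence.
-/

open Filter Real Polynomial Set Topology Matrix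

section PolyExpDecay

variable {E : Type*} [NormedAddCommGroup E]

def PolyExpDecay (f : ℝ → E) (k : ℕ) : Prop :=
  ∃ A, ∀ t, 0 ≤ t → ‖f t‖ ≤ A * (1 + t) ^ k * exp (-t)

theorem PolyExpDecay.exists_polynomial {f : ℝ → E} {k : ℕ} (hf : PolyExpDecay f k) :
    ∃ p : ℝ[X], p.natDegree ≤ k ∧ ∀ t, 0 ≤ t → ‖f t‖ ≤ p.eval t * exp (-t) := by
  obtain ⟨A, hA⟩ := hf
  refine ⟨C A * (X + 1) ^ k, ?_, fun t ht => ?_⟩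
  · calc (C A * (X + 1) ^ k).natDegree ≤ ((X + 1) ^ k : ℝ[X]).natDegree := natDegree_C_mul_le _ _
      _ ≤ k * (X + 1 : ℝ[X]).natDegree := natDegree_pow_le
      _ = k := by rw [← C_1, natDegree_X_add_C, mul_one]
  · simpa [add_comm t] using hA t ht

theorem PolyExpDecay.tendsto_zero {f : ℝ → E} {k : ℕ} (hf : PolyExpDecay f k) :
    Tendsto f atTop (𝓝 0) := by
  obtain ⟨p, -, hp⟩ := hf.exists_polynomial
  have hbound : Tendsto (fun t => p.eval t * exp (-t)) atTop (𝓝 0) := by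
    simpa only [exp_neg, div_eq_mul_inv] using p.tendsto_div_exp_atTop
  exact squeeze_zero_norm' (eventually_atTop.2 ⟨0, hp⟩) hbound

theorem PolyExpDecay.of_norm_le_mul {F : Type*} [NormedAddCommGroup F] {f : ℝ → E} {g : ℝ → F}
    {k : ℕ} (hg : PolyExpDecay g k) {c : ℝ} (hc : 0 ≤ c) (hfg : ∀ t, ‖f t‖ ≤ c * ‖g t‖) :
    PolyExpDecay f k := by
  obtain ⟨A, hA⟩ := hg
  refine ⟨c * A, fun t ht => (hfg t).trans ?_⟩
  calc c * ‖g t‖ ≤ c * (A * (1 + t) ^ k * exp (-t)) := mul_le_mul_of_nonneg_left (hA t ht) hc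
    _ = c * A * (1 + t) ^ k * exp (-t) := by ring

variable [NormedSpace ℝ E]

/-- `exp s • e s` has derivative `exp s • d s`, of norm at most `A (1 + t) ^ k` on `[0, t]`. -/
theorem norm_le_of_hasDerivAt_eq_sub_self {e d : ℝ → E} (he : ∀ t, HasDerivAt e (d t - e t) t)
    {A : ℝ} {k : ℕ} (hd : ∀ s, 0 ≤ s → ‖d s‖ ≤ A * (1 + s) ^ k * exp (-s)) {t : ℝ} (ht : 0 ≤ t) :
    ‖e t‖ ≤ (‖e 0‖ + A * (1 + t) ^ k * t) * exp (-t) := by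
  set g : ℝ → E := fun s => exp s • e s
  have hg : ∀ s, HasDerivAt g (exp s • d s) s := fun s => by
    refine ((hasDerivAt_exp s).smul (he s)).congr_deriv ?_
    rw [smul_sub, sub_add_cancel]
  have hg' : ∀ s ∈ Ico 0 t, ‖exp s • d s‖ ≤ A * (1 + t) ^ k := fun s hs => by
    have hA : 0 ≤ A := by simpa using (norm_nonneg _).trans (hd 0 le_rfl)
    calc ‖exp s • d s‖ ≤ exp s * (A * (1 + s) ^ k * exp (-s)) := by
          rw [norm_smul, norm_of_nonneg (exp_pos s).le]
          exact mul_le_mul_of_nonneg_left (hd s hs.1) (exp_pos s).le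
      _ = A * (1 + s) ^ k := by
          rw [mul_comm, mul_assoc, ← exp_add, neg_add_cancel, exp_zero, mul_one]
      _ ≤ A * (1 + t) ^ k := by gcongr <;> linarith [hs.1, hs.2]
  have hmv := norm_image_sub_le_of_norm_deriv_le_segment'
    (fun s _ => (hg s).hasDerivWithinAt) hg' t (right_mem_Icc.2 ht)
  have het : e t = exp (-t) • g t := by simp [g, smul_smul, ← exp_add]
  calc ‖e t‖ = exp (-t) * ‖g 0 + (g t - g 0)‖ := by
        rw [het, norm_smul, norm_of_nonneg (exp_pos _).le, add_sub_cancel]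
    _ ≤ exp (-t) * (‖e 0‖ + A * (1 + t) ^ k * t) := by
        gcongr
        refine (norm_add_le _ _).trans (add_le_add (by simp [g]) ?_)
        simpa using hmv
    _ = _ := mul_comm _ _

theorem PolyExpDecay.of_hasDerivAt_eq_neg {e : ℝ → E} (he : ∀ t, HasDerivAt e (-e t) t) :
    PolyExpDecay e 0 :=
  ⟨‖e 0‖, fun t ht => by
    simpa using norm_le_of_hasDerivAt_eq_sub_self (d := 0) (A := 0) (k := 0)
      (fun t => by simpa using he t) (by simp) ht⟩

theorem PolyExpDecay.of_hasDerivAt_eq_sub_self {e d : ℝ → E} {k : ℕ}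
    (he : ∀ t, HasDerivAt e (d t - e t) t) (hd : PolyExpDecay d k) : PolyExpDecay e (k + 1) := by
  obtain ⟨A, hA⟩ := hd
  refine ⟨‖e 0‖ + A, fun t ht => ?_⟩
  have h1 : 1 ≤ (1 + t) ^ (k + 1) := one_le_pow₀ (by linarith)
  have hA0 : 0 ≤ A := by simpa using (norm_nonneg _).trans (hA 0 le_rfl)
  refine (norm_le_of_hasDerivAt_eq_sub_self he hA ht).trans ?_
  gcongr
  calc ‖e 0‖ + A * (1 + t) ^ k * t ≤ ‖e 0‖ * (1 + t) ^ (k + 1) + A * (1 + t) ^ k * (1 + t) := by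
        gcongr
        · exact le_mul_of_one_le_right (norm_nonneg _) h1
        · linarith
    _ = (‖e 0‖ + A) * (1 + t) ^ (k + 1) := by ring

end PolyExpDecay

theorem HasDerivAt.sigma_fiber {α : Type*} {κ : α → Type*} [∀ a, Fintype (κ a)]
    {f : ℝ → (Σ a, κ a) → ℝ} {f' : (Σ a, κ a) → ℝ} {t : ℝ} (hf : HasDerivAt f f' t) (a : α) :
    HasDerivAt (fun s j => f s ⟨a, j⟩) (fun j => f' ⟨a, j⟩) t :=
  hasDerivAt_pi.2 fun j => hasDerivAt_pi.1 hf ⟨a, j⟩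

theorem Matrix.abs_mulVec_apply_le_of_forall_ne_block {ι α : Type*} {κ : α → Type*} [Fintype α]
    [∀ a, Fintype (κ a)] (W : Matrix ι (Σ a, κ a) ℝ) {i : ι} {b : α}
    (hW : ∀ j : Σ a, κ a, j.1 ≠ b → W i j = 0) (v : (Σ a, κ a) → ℝ) :
    |(W *ᵥ v) i| ≤ (∑ j, |W i j|) * ‖fun j => v ⟨b, j⟩‖ := by
  rw [mulVec, dotProduct, Finset.sum_mul]
  refine (Finset.abs_sum_le_sum_abs _ _).trans (Finset.sum_le_sum fun j _ => ?_)
  obtain ⟨a, j⟩ := j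
  rw [abs_mul]
  by_cases hab : a = b
  · subst hab
    exact mul_le_mul_of_nonneg_left (norm_le_pi_norm (fun j => v ⟨a, j⟩) j) (abs_nonneg _)
  · simp [hW ⟨a, j⟩ hab]

section MeanField

variable {L : ℕ} {κ : Fin L → Type*} [∀ ℓ, Fintype (κ ℓ)]

def meanField (W : Matrix (Σ ℓ, κ ℓ) (Σ ℓ, κ ℓ) ℝ) (σ : Fin L → ℝ → ℝ) (β : (Σ ℓ, κ ℓ) → ℝ)
    (x : (Σ ℓ, κ ℓ) → ℝ) : (Σ ℓ, κ ℓ) → ℝ :=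
  fun i => σ i.1 ((W *ᵥ x) i + β i)

variable {W : Matrix (Σ ℓ, κ ℓ) (Σ ℓ, κ ℓ) ℝ} {σ : Fin L → ℝ → ℝ} {β : (Σ ℓ, κ ℓ) → ℝ}

theorem meanField_sub_block_eq_zero_of_val_eq_zero
    (hW : ∀ i j : Σ ℓ, κ ℓ, (i.1 : ℕ) ≠ (j.1 : ℕ) + 1 → W i j = 0) {ℓ : Fin L} (hℓ : (ℓ : ℕ) = 0)
    (x y : (Σ ℓ, κ ℓ) → ℝ) : (fun j => (meanField W σ β x - meanField W σ β y) ⟨ℓ, j⟩) = 0 := by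
  have hrow : ∀ (j : κ ℓ) (v : (Σ ℓ, κ ℓ) → ℝ), (W *ᵥ v) ⟨ℓ, j⟩ = 0 := fun j v =>
    Finset.sum_eq_zero fun i _ => by simp [hW ⟨ℓ, j⟩ i (by simp [hℓ])]
  funext j
  simp [meanField, hrow]

theorem norm_meanField_sub_block_le
    (hW : ∀ i j : Σ ℓ, κ ℓ, (i.1 : ℕ) ≠ (j.1 : ℕ) + 1 → W i j = 0)
    {K : Fin L → NNReal} (hσ : ∀ ℓ, LipschitzWith (K ℓ) (σ ℓ)) {ℓ k : Fin L}
    (hℓ : (ℓ : ℕ) = k + 1) (x y : (Σ ℓ, κ ℓ) → ℝ) :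
    ‖fun j => (meanField W σ β x - meanField W σ β y) ⟨ℓ, j⟩‖ ≤
      K ℓ * (∑ i, ∑ j, |W i j|) * ‖fun j => (x - y) ⟨k, j⟩‖ := by
  refine (pi_norm_le_iff_of_nonneg (by positivity)).2 fun j => ?_
  have hrow : |(W *ᵥ (x - y)) ⟨ℓ, j⟩| ≤ (∑ i, ∑ j, |W i j|) * ‖fun j => (x - y) ⟨k, j⟩‖ := by
    refine (W.abs_mulVec_apply_le_of_forall_ne_block (b := k) (fun i hi => hW _ _ ?_) _).trans ?_
    · rw [hℓ]; exact fun h => hi (Fin.ext (by omega))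
    · exact mul_le_mul_of_nonneg_right (Finset.single_le_sum (f := fun i => ∑ j, |W i j|)
        (fun i _ => by positivity) (Finset.mem_univ _)) (norm_nonneg _)
  calc ‖(meanField W σ β x - meanField W σ β y) ⟨ℓ, j⟩‖
      ≤ K ℓ * |(W *ᵥ x) ⟨ℓ, j⟩ - (W *ᵥ y) ⟨ℓ, j⟩| := by
        have hlip := (hσ ℓ).dist_le_mul ((W *ᵥ x) ⟨ℓ, j⟩ + β ⟨ℓ, j⟩) ((W *ᵥ y) ⟨ℓ, j⟩ + β ⟨ℓ, j⟩)
        rwa [dist_eq, dist_eq, add_sub_add_right_eq_sub] at hlip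
    _ ≤ _ := by
        rw [mul_assoc, ← Pi.sub_apply, ← Matrix.mulVec_sub]
        gcongr

theorem polyExpDecay_block_sub
    (hW : ∀ i j : Σ ℓ, κ ℓ, (i.1 : ℕ) ≠ (j.1 : ℕ) + 1 → W i j = 0)
    {K : Fin L → NNReal} (hσ : ∀ ℓ, LipschitzWith (K ℓ) (σ ℓ))
    {m : ℝ → (Σ ℓ, κ ℓ) → ℝ} (hm : ∀ t, HasDerivAt m (meanField W σ β (m t) - m t) t)
    {mbar : (Σ ℓ, κ ℓ) → ℝ} (hmbar : meanField W σ β mbar = mbar) (ℓ : Fin L) :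
    PolyExpDecay (fun t j => (m t - mbar) ⟨ℓ, j⟩) ℓ := by
  have herr : ∀ (ℓ : Fin L) t, HasDerivAt (fun t j => (m t - mbar) ⟨ℓ, j⟩)
      ((fun j => (meanField W σ β (m t) - meanField W σ β mbar) ⟨ℓ, j⟩) -
        fun j => (m t - mbar) ⟨ℓ, j⟩) t :=
    fun ℓ t => by
      refine (((hm t).sub_const mbar).sigma_fiber ℓ).congr_deriv ?_
      rw [hmbar]; funext j; simp
  obtain ⟨k, hk⟩ := ℓ
  induction k with
  | zero =>
    refine PolyExpDecay.of_hasDerivAt_eq_neg fun t => (herr _ t).congr_deriv ?_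
    rw [meanField_sub_block_eq_zero_of_val_eq_zero hW rfl, zero_sub]
  | succ k ih =>
    exact PolyExpDecay.of_hasDerivAt_eq_sub_self (herr _) <| (ih (by omega)).of_norm_le_mul
      (by positivity) fun t => norm_meanField_sub_block_le hW hσ rfl _ _

end MeanField

/-- for the continuous-time mean dynamics `ṁ = σ(W m + β) - m`
with strictly sub-diagonal block-triangular `W` and blockwise Lipschitz `σ`,
the block error `e_ℓ(t) = m_ℓ(t) - m̄_ℓ` (blocks `0`-indexed) satisfies
`‖e_ℓ(t)‖ ≤ p_ℓ(t) e^{-t}` for a polynomial `p_ℓ` of degree at most `ℓ`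
(the paper's `ℓ - 1` in `1`-indexed form); hence `m(t) → m̄` exponentially. -/
theorem stmt18 {L : ℕ} {n : Fin L → ℕ}
    (W : Matrix ((ℓ : Fin L) × Fin (n ℓ)) ((ℓ : Fin L) × Fin (n ℓ)) ℝ)
    (hW : ∀ i j : (ℓ : Fin L) × Fin (n ℓ), (i.1 : ℕ) ≠ (j.1 : ℕ) + 1 → W i j = 0)
    (σ : Fin L → ℝ → ℝ) (K : Fin L → NNReal)
    (hσ : ∀ ℓ, LipschitzWith (K ℓ) (σ ℓ))
    (β : ((ℓ : Fin L) × Fin (n ℓ)) → ℝ)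
    (m : ℝ → ((ℓ : Fin L) × Fin (n ℓ)) → ℝ)
    (hm : ∀ t, HasDerivAt m (fun i => σ i.1 (W.mulVec (m t) i + β i) - m t i) t)
    (mbar : ((ℓ : Fin L) × Fin (n ℓ)) → ℝ)
    (hmbar : ∀ i, mbar i = σ i.1 (W.mulVec mbar i + β i)) :
    (∀ ℓ : Fin L, ∃ p : Polynomial ℝ, p.natDegree ≤ (ℓ : ℕ) ∧
      ∀ t, 0 ≤ t →
        ‖(fun j : Fin (n ℓ) => m t ⟨ℓ, j⟩ - mbar ⟨ℓ, j⟩)‖ ≤ p.eval t * Real.exp (-t)) ∧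
    Tendsto m atTop (nhds mbar) := by
  have hdecay := polyExpDecay_block_sub (β := β) hW hσ hm (funext fun i => (hmbar i).symm)
  refine ⟨fun ℓ => (hdecay ℓ).exists_polynomial, ?_⟩
  rw [← tendsto_sub_nhds_zero_iff, tendsto_pi_nhds]
  exact fun i => ((continuous_apply i.2).tendsto 0).comp (hdecay i.1).tendsto_zero
end
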